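/- Let P(τ) = U_ref/(γ τ^γ) for γ > 0 (or P(τ) = -U_ref ln(τ) for γ = 0). If τ_i, u_i : ℝ → ℝ are differentiable, τ_i > 0, and they satisfy τ̇_i = (u_{i+1} - u_i)/ΔX and u̇_i = U_ref ΔX^γ (u_{i+1} - u_i)/(x_{i+1} - x_i)^{γ+1} with τ_i = (x_{i+1} - x_i)/ΔX, then the quantity w_i = u_i + P(τ_i) is constant in time, i.e., ẇ_i = 0. -/

import Mathlib

/-! Along a trajectory, `d/dt P(τ) = -U_ref τ̇ / τ^(γ+1)`, while substituting
`x_{i+1} - x_i = ΔX τ_i` turns the speed equation into `u̇ = U_ref τ̇ / τ^(γ+1)`;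
the two cancel. -/

open Real

theorem HasDerivAt.const_div_mul_rpow {f : ℝ → ℝ} {f' c γ t : ℝ} (hf : HasDerivAt f f' t)
    (hpos : 0 < f t) (hγ : γ ≠ 0) :
    HasDerivAt (fun s => c / (γ * f s ^ γ)) (-(c * f' / f t ^ (γ + 1))) t := by
  have hne : f t ≠ 0 := hpos.ne'
  have hden := (hf.rpow_const (p := γ) (Or.inl hne)).const_mul γ
  refine ((hasDerivAt_const t c).div hden (by positivity)).congr_deriv ?_
  rw [rpow_add_one hne, rpow_sub_one hne]
  field_simp
  ring

theorem mul_rpow_div_mul_rpow_add_one {a b c v γ : ℝ} (ha : 0 < a) (hb : 0 < b) :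
    c * a ^ γ * v / (a * b) ^ (γ + 1) = c * (v / a) / b ^ (γ + 1) := by
  rw [mul_rpow ha.le hb.le, rpow_add_one ha.ne']
  have : 0 < a ^ γ := rpow_pos_of_pos ha γ
  have : 0 < b ^ (γ + 1) := rpow_pos_of_pos hb _
  field_simp

theorem stmt_0_general
    (ΔX Uref γ : ℝ) (hΔX : 0 < ΔX) (hγ : 0 < γ)
    (x xnext u unext τ : ℝ → ℝ)
    (hτpos : ∀ t, 0 < τ t)
    (hτdef : ∀ t, τ t = (xnext t - x t) / ΔX)
    (hτ' : ∀ t, HasDerivAt τ ((unext t - u t) / ΔX) t)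
    (hu' : ∀ t, HasDerivAt u
      (Uref * ΔX ^ γ * (unext t - u t) / (xnext t - x t) ^ (γ + 1)) t) :
    ∀ t, HasDerivAt (fun t => u t + Uref / (γ * (τ t) ^ γ)) 0 t := by
  intro t
  have hgap : xnext t - x t = ΔX * τ t := by
    rw [hτdef]
    field_simp
  have hw := (hu' t).add ((hτ' t).const_div_mul_rpow (c := Uref) (hτpos t) hγ.ne')
  rwa [hgap, mul_rpow_div_mul_rpow_add_one hΔX (hτpos t), add_neg_cancel] at hw

/-- 1D FTL: w_i = u_i + P(τ_i) is constant in time, where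
P(τ) = U_ref/(γ τ^γ) for γ > 0. -/
theorem stmt_0
    (ΔX Uref γ : ℝ) (hΔX : 0 < ΔX) (hU : 0 < Uref) (hγ : 0 < γ)
    (x xnext u unext τ : ℝ → ℝ)
    (hτpos : ∀ t, 0 < τ t)
    (hτdef : ∀ t, τ t = (xnext t - x t) / ΔX)
    (hτ' : ∀ t, HasDerivAt τ ((unext t - u t) / ΔX) t)
    (hu' : ∀ t, HasDerivAt u
      (Uref * ΔX ^ γ * (unext t - u t) / (xnext t - x t) ^ (γ + 1)) t) :
    ∀ t, HasDerivAt (fun t => u t + Uref / (γ * (τ t) ^ γ)) 0 t :=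
  stmt_0_general ΔX Uref γ hΔX hγ x xnext u unext τ hτpos hτdef hτ' hu'
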